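/- Let T be a finite set of τ-closed, similar iterative τ-multi-polynomials (each self-dependent component of each member has the form xᵢ + τ·(polynomial in lower-indexed self-dependent variables), and all members have the same abstraction after τ := 1 and coefficient flattening). Then the closure of T under the τ-absorbing composition ⋆, namely T^★ = ⋃_{k≥1} T^{⋆(k)} where T^{⋆(k+1)} = T^{⋆(k)} ∪ { q ⋆ p : q ∈ T, p ∈ T^{⋆(k)} }, is a finite set. -/

import Mathlib

open MvPolynomial

/-- Variable set for τ-polynomials: `n` program variables plus the extra variable τ. -/
abbrev Vn (n : ℕ) := Fin n ⊕ Unit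

open Classical in
/-- The linear part `Lin(r)`: the sum of monomials of `r` of the form `a·xᵢ`
(linear in a single program variable, τ-free). -/
noncomputable def linPart {n : ℕ} (r : MvPolynomial (Vn n) ℕ) : MvPolynomial (Vn n) ℕ :=
  ∑ m ∈ r.support.filter (fun m => ∃ i : Fin n, m = Finsupp.single (Sum.inl i) 1),
    monomial m (r.coeff m)

open Classical in
/-- The non-linear part `NonLin(r)`: all remaining monomials, so `r = Lin(r) + NonLin(r)`. -/
noncomputable def nonLinPart {n : ℕ} (r : MvPolynomial (Vn n) ℕ) : MvPolynomial (Vn n) ℕ :=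
  ∑ m ∈ r.support.filter (fun m => ¬ ∃ i : Fin n, m = Finsupp.single (Sum.inl i) 1),
    monomial m (r.coeff m)

/-- Evaluation of a τ-polynomial at `x ∈ ℕⁿ` and `τ = t`, as a real number. -/
noncomputable def evalR {n : ℕ} (r : MvPolynomial (Vn n) ℕ) (x : Fin n → ℕ) (t : ℕ) : ℝ :=
  aeval (Sum.elim (fun i => (x i : ℝ)) (fun _ => (t : ℝ))) r

/-- `c⋄r = Lin(r) + c·NonLin(r)`, evaluated at `(x, t)`. -/
noncomputable def cDia {n : ℕ} (c : ℝ) (r : MvPolynomial (Vn n) ℕ)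
    (x : Fin n → ℕ) (t : ℕ) : ℝ :=
  evalR (linPart r) x t + c * evalR (nonLinPart r) x t

/-- Composition `r ∘ p`: substitute `p[i]` for `xᵢ` in `r`, leaving τ fixed. -/
noncomputable def tcomp {n : ℕ} (r : MvPolynomial (Vn n) ℕ)
    (p : Fin n → MvPolynomial (Vn n) ℕ) : MvPolynomial (Vn n) ℕ :=
  bind₁ (Sum.elim p (fun _ => X (Sum.inr ()))) r

/-- Evaluation of a τ-multi-polynomial component over ℕ at `(x, t)`. -/
noncomputable def evalN {n : ℕ} (r : MvPolynomial (Vn n) ℕ) (x : Fin n → ℕ) (t : ℕ) : ℕ :=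
  eval (Sum.elim x (fun _ => t)) r


/-- The abstraction map `α`: replace every nonzero coefficient by `1`. -/
noncomputable def absP {σ : Type*} (p : MvPolynomial σ ℕ) : MvPolynomial σ ℕ :=
  ∑ m ∈ p.support, monomial m 1

/-- `⌊q⌋ = α(q[1/τ])`: substitute `1` for τ, then flatten coefficients to 0/1. -/
noncomputable def flat {n : ℕ} (q : MvPolynomial (Vn n) ℕ) : MvPolynomial (Fin n) ℕ :=
  absP (aeval (Sum.elim X (fun _ => 1)) q)

/-- The join `p ⊔ q`: coefficientwise maximum. -/
noncomputable def pjoin {σ : Type*} [DecidableEq σ] (p q : MvPolynomial σ ℕ) : MvPolynomial σ ℕ :=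
  ∑ m ∈ p.support ∪ q.support, monomial m (max (p.coeff m) (q.coeff m))

/-- A weighted trace: a list of steps, each a τ-multi-polynomial with a weight. -/
abbrev WTrace (n : ℕ) := List ((Fin n → MvPolynomial (Vn n) ℕ) × ℕ)

/-- A concrete execution of a weighted trace: each step applies its
multi-polynomial with its weight substituted for τ. -/
noncomputable def runW {n : ℕ} (σ : WTrace n) (x : Fin n → ℕ) : Fin n → ℕ :=
  σ.foldl (fun s fw => fun i => eval (Sum.elim s (fun _ => fw.2)) (fw.1 i)) x

/-- The weight of a trace: the sum of the step weights. -/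
def wgt {n : ℕ} (σ : WTrace n) : ℕ := (σ.map Prod.snd).sum

/-- `p` bounds the weighted trace `σ`: for every concrete execution of `σ` from
`x` ending in `y` and every `t ≥ wgt σ`, `y ≤ p(x,t)` componentwise. -/
def boundsTr {n : ℕ} (p : Fin n → MvPolynomial (Vn n) ℕ) (σ : WTrace n) : Prop :=
  ∀ x : Fin n → ℕ, ∀ t : ℕ, wgt σ ≤ t → ∀ i,
    runW σ x i ≤ eval (Sum.elim x (fun _ => t)) (p i)

open Classical in
/-- For a τ-closed iterative component `f = xᵢ + τ·f′`, extract `f′`: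
drop the monomial `xᵢ` and divide the remaining monomials by τ. -/
noncomputable def primeOf {n : ℕ} (f : MvPolynomial (Vn n) ℕ) (i : Fin n) :
    MvPolynomial (Vn n) ℕ :=
  ∑ m ∈ f.support.filter (fun m => m ≠ Finsupp.single (Sum.inl i) 1),
    monomial (m - Finsupp.single (Sum.inr ()) 1) (f.coeff m)

open Classical in
/-- τ-absorbing composition `q ⋆ p` (relative to the common abstraction `A`,
which determines the self-dependent indices):
`(q ⋆ p)[i] = xᵢ + τ·(p[i]′ ⊔ (q[i]′ ∘ p))` for self-dependent `i`,
and `(q ⋆ p)[i] = q[i] ∘ p` otherwise. -/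
noncomputable def starComp {n : ℕ} (A : Fin n → MvPolynomial (Fin n) ℕ)
    (q p : Fin n → MvPolynomial (Vn n) ℕ) : Fin n → MvPolynomial (Vn n) ℕ :=
  fun i =>
    if i ∈ (A i).vars then
      X (Sum.inl i) + X (Sum.inr ()) * pjoin (primeOf (p i) i) (tcomp (primeOf (q i) i) p)
    else tcomp (q i) p

/-- `T^{⋆(k)}`: `T^{⋆(1)} = T` and `T^{⋆(k+1)} = T^{⋆(k)} ∪ {q ⋆ p : q ∈ T, p ∈ T^{⋆(k)}}`. -/
def starPow {n : ℕ} (A : Fin n → MvPolynomial (Fin n) ℕ)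
    (T : Set (Fin n → MvPolynomial (Vn n) ℕ)) :
    ℕ → Set (Fin n → MvPolynomial (Vn n) ℕ)
  | 0 => T
  | k + 1 => starPow A T k ∪
      {r | ∃ q ∈ T, ∃ p ∈ starPow A T k, r = starComp A q p}

/-!
Order multi-polynomials coefficientwise. Substitution `r ∘ p` is monotone in `p`, and `a ⊔ b`
lies below every common upper bound of `a` and `b`. Since every component depends only on
self-dependent variables of lower index, recursion on the index yields one fixed
multi-polynomial that dominates the whole closure: each `p ∈ T^★` has `p[i] = xᵢ + τ·r` with `r`
below a fixed bound at self-dependent `i`, and `p[i]` below a fixed bound otherwise; this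
invariant survives `q ⋆ p` because `q[i]′ ∘ p` and `q[i] ∘ p` only read components of `p` of
lower index. The coefficientwise down-set of a fixed polynomial is finite.
-/

namespace MvPolynomial

variable {σ R : Type*} [CommSemiring R]

instance [PartialOrder R] : PartialOrder (MvPolynomial σ R) where
  le p q := ∀ m, coeff m p ≤ coeff m q
  le_refl _ _ := le_rfl
  le_trans _ _ _ h h' m := (h m).trans (h' m)
  le_antisymm _ _ h h' := ext _ _ fun m => (h m).antisymm (h' m)

instance [PartialOrder R] [IsOrderedAddMonoid R] : IsOrderedAddMonoid (MvPolynomial σ R) where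
  add_le_add_left _ _ h c m := by
    simp only [coeff_add]
    exact add_le_add_left (h m) _

instance [PartialOrder R] [CanonicallyOrderedAdd R] [Sub R] [OrderedSub R] :
    CanonicallyOrderedAdd (MvPolynomial σ R) where
  exists_add_of_le {p q} h := by
    obtain ⟨c, hc⟩ := exists_add_of_le (a := AddMonoidAlgebra.coeffAddEquiv p)
      (b := AddMonoidAlgebra.coeffAddEquiv q) h
    exact ⟨AddMonoidAlgebra.coeffAddEquiv.symm c,
      AddMonoidAlgebra.coeffAddEquiv.injective (by simpa using hc)⟩
  le_add_self _ _ _ := by simp only [coeff_add]; exact le_add_self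
  le_self_add _ _ _ := by simp only [coeff_add]; exact le_self_add

theorem finite_setOf_le [PartialOrder R] [CanonicallyOrderedAdd R] [LocallyFiniteOrder R]
    (P : MvPolynomial σ R) : {p : MvPolynomial σ R | p ≤ P}.Finite := by
  classical
  exact ((Set.finite_Iic (AddMonoidAlgebra.coeffAddEquiv P)).preimage
    AddMonoidAlgebra.coeffAddEquiv.injective.injOn).subset fun _ hp => hp

theorem bind₁_mono {τ : Type*} [PartialOrder R] [CanonicallyOrderedAdd R] [Sub R] [OrderedSub R]
    {f g : σ → MvPolynomial τ R} (h : ∀ i, f i ≤ g i) (p : MvPolynomial σ R) :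
    bind₁ f p ≤ bind₁ g p := by
  induction p using MvPolynomial.induction_on with
  | C a => simp only [bind₁_C_right, le_rfl]
  | add p q hp hq => simpa only [map_add] using add_le_add hp hq
  | mul_X p i hp => simpa only [map_mul, bind₁_X_right] using mul_le_mul' hp (h i)

theorem bind₁_congr_vars {τ : Type*} {f g : σ → MvPolynomial τ R} {p : MvPolynomial σ R}
    (h : ∀ i ∈ p.vars, f i = g i) : bind₁ f p = bind₁ g p :=
  hom_congr_vars (by ext; simp) (fun i hi _ => by simpa using h i hi) rfl

theorem coeff_pjoin [DecidableEq σ] (p q : MvPolynomial σ ℕ) (m : σ →₀ ℕ) :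
    coeff m (pjoin p q) = max (coeff m p) (coeff m q) := by
  simp only [pjoin, coeff_sum, coeff_monomial, Finset.sum_ite_eq', Finset.mem_union,
    mem_support_iff]
  split_ifs with hm
  · rfl
  · simp_all

theorem pjoin_le [DecidableEq σ] {p q r : MvPolynomial σ ℕ} (hp : p ≤ r) (hq : q ≤ r) :
    pjoin p q ≤ r := fun m => (coeff_pjoin p q m).trans_le (max_le (hp m) (hq m))

end MvPolynomial

section Substitution

variable {n : ℕ}

theorem tcomp_mono (r : MvPolynomial (Vn n) ℕ) {p p' : Fin n → MvPolynomial (Vn n) ℕ}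
    (h : ∀ j, p j ≤ p' j) : tcomp r p ≤ tcomp r p' :=
  bind₁_mono (by rintro (j | _); exacts [h j, le_rfl]) r

theorem tcomp_congr {r : MvPolynomial (Vn n) ℕ} {p p' : Fin n → MvPolynomial (Vn n) ℕ}
    (h : ∀ j, (Sum.inl j : Vn n) ∈ r.vars → p j = p' j) : tcomp r p = tcomp r p' :=
  bind₁_congr_vars (by rintro (j | _) hj; exacts [h j hj, rfl])

theorem primeOf_X_add_X_mul (i : Fin n) (r : MvPolynomial (Vn n) ℕ) :
    primeOf (X (Sum.inl i) + X (Sum.inr ()) * r) i = r := by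
  classical
  have hne : ∀ m, Finsupp.single (Sum.inr ()) 1 + m ≠ Finsupp.single (Sum.inl i) 1 :=
    fun m h => by simpa using DFunLike.congr_fun h (Sum.inr ())
  have hsupp : (X (Sum.inl i) + X (Sum.inr ()) * r).support.filter
      (· ≠ Finsupp.single (Sum.inl i) 1) = (X (Sum.inr ()) * r).support := by
    ext m
    by_cases hm : m = Finsupp.single (Sum.inl i) 1
    · simp [hm, support_X_mul, hne]
    · simp only [Finset.mem_filter, mem_support_iff, coeff_add, coeff_X, if_neg (Ne.symm hm),
        zero_add, hm, ne_eq, not_false_eq_true, and_true]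
  rw [primeOf, hsupp, support_X_mul, Finset.sum_map]
  conv_rhs => rw [r.as_sum]
  refine Finset.sum_congr rfl fun m _ => ?_
  rw [addLeftEmbedding_apply, add_tsub_cancel_left, coeff_add, coeff_X_mul, coeff_X,
    if_neg (hne m).symm, zero_add]

theorem X_add_X_mul_le {i : Fin n} {r s : MvPolynomial (Vn n) ℕ} (h : r ≤ s) :
    X (Sum.inl i) + X (Sum.inr ()) * r ≤ X (Sum.inl i) + X (Sum.inr ()) * s :=
  add_le_add_right (mul_le_mul_right h _) _

end Substitution

structure IsTauClosedIterative {n : ℕ} (A : Fin n → MvPolynomial (Fin n) ℕ)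
    (q : Fin n → MvPolynomial (Vn n) ℕ) : Prop where
  mem_vars : ∀ i j : Fin n, (Sum.inl j : Vn n) ∈ (q i).vars → j ∈ (A j).vars ∧ j ≤ i
  eq_X_add_X_mul : ∀ i : Fin n, i ∈ (A i).vars →
    ∃ r : MvPolynomial (Vn n) ℕ, q i = X (Sum.inl i) + X (Sum.inr ()) * r ∧
      ∀ j : Fin n, (Sum.inl j : Vn n) ∈ r.vars → j ∈ (A j).vars ∧ j < i

namespace StarClosure

variable {n : ℕ} (A : Fin n → MvPolynomial (Fin n) ℕ) (Tf : Finset (Fin n → MvPolynomial (Vn n) ℕ))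

/-- Dominates the primed part of every member of `T^★` at a self-dependent index `i`: the
summand `q[i]′` covers the members of `T`, and `q[i]′ ∘ lowerSubst i` covers the new argument
`q[i]′ ∘ p` of `⊔` in `q ⋆ p`, because `q[i]′` only involves lower self-dependent variables. -/
noncomputable def primeBound (i : Fin n) : MvPolynomial (Vn n) ℕ :=
  ∑ q ∈ Tf, (primeOf (q i) i + tcomp (primeOf (q i) i) fun j =>
    if h : j ∈ (A j).vars ∧ j < i then X (Sum.inl j) + X (Sum.inr ()) * primeBound j else 0)
termination_by i
decreasing_by exact h.2

noncomputable def lowerSubst (i : Fin n) : Fin n → MvPolynomial (Vn n) ℕ := fun j =>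
  if j ∈ (A j).vars ∧ j < i then X (Sum.inl j) + X (Sum.inr ()) * primeBound A Tf j else 0

theorem primeBound_eq (i : Fin n) :
    primeBound A Tf i =
      ∑ q ∈ Tf, (primeOf (q i) i + tcomp (primeOf (q i) i) (lowerSubst A Tf i)) := by
  rw [primeBound]
  rfl

noncomputable def nonSelfBound (i : Fin n) : MvPolynomial (Vn n) ℕ :=
  ∑ q ∈ Tf, (q i + tcomp (q i) (lowerSubst A Tf i))

def IsDominated (p : Fin n → MvPolynomial (Vn n) ℕ) : Prop :=
  ∀ i : Fin n,
    (i ∈ (A i).vars → ∃ r ≤ primeBound A Tf i, p i = X (Sum.inl i) + X (Sum.inr ()) * r) ∧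
    (i ∉ (A i).vars → p i ≤ nonSelfBound A Tf i)

theorem finite_setOf_isDominated : {p | IsDominated A Tf p}.Finite := by
  refine (Set.Finite.pi fun i => finite_setOf_le (if i ∈ (A i).vars then
    X (Sum.inl i) + X (Sum.inr ()) * primeBound A Tf i else nonSelfBound A Tf i)).subset ?_
  intro p hp i _
  by_cases hi : i ∈ (A i).vars
  · obtain ⟨r, hr, hpi⟩ := (hp i).1 hi
    simpa only [Set.mem_ofPred_eq, if_pos hi, hpi] using X_add_X_mul_le hr
  · simpa only [Set.mem_ofPred_eq, if_neg hi] using (hp i).2 hi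

variable {A Tf}

theorem IsDominated.tcomp_le {p : Fin n → MvPolynomial (Vn n) ℕ} (hp : IsDominated A Tf p)
    {i : Fin n} {r : MvPolynomial (Vn n) ℕ}
    (hr : ∀ j : Fin n, (Sum.inl j : Vn n) ∈ r.vars → j ∈ (A j).vars ∧ j < i) :
    tcomp r p ≤ tcomp r (lowerSubst A Tf i) := by
  calc tcomp r p = tcomp r fun j => if j ∈ (A j).vars ∧ j < i then p j else 0 :=
        tcomp_congr fun j hj => (if_pos (hr j hj)).symm
    _ ≤ tcomp r (lowerSubst A Tf i) := tcomp_mono r fun j => by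
        unfold lowerSubst
        split_ifs with hj
        · obtain ⟨s, hs, hpj⟩ := (hp j).1 hj.1
          exact hpj ▸ X_add_X_mul_le hs
        · exact le_rfl

theorem primeOf_le_primeBound {q : Fin n → MvPolynomial (Vn n) ℕ} (hq : q ∈ Tf) (i : Fin n) :
    primeOf (q i) i ≤ primeBound A Tf i := by
  have h := Finset.single_le_sum_of_canonicallyOrdered (f := fun q =>
    primeOf (q i) i + tcomp (primeOf (q i) i) (lowerSubst A Tf i)) hq
  rw [primeBound_eq]
  exact le_self_add.trans h

theorem tcomp_primeOf_le_primeBound {q : Fin n → MvPolynomial (Vn n) ℕ} (hq : q ∈ Tf)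
    (i : Fin n) : tcomp (primeOf (q i) i) (lowerSubst A Tf i) ≤ primeBound A Tf i := by
  have h := Finset.single_le_sum_of_canonicallyOrdered (f := fun q =>
    primeOf (q i) i + tcomp (primeOf (q i) i) (lowerSubst A Tf i)) hq
  rw [primeBound_eq]
  exact le_add_self.trans h

theorem le_nonSelfBound {q : Fin n → MvPolynomial (Vn n) ℕ} (hq : q ∈ Tf) (i : Fin n) :
    q i ≤ nonSelfBound A Tf i := by
  have h := Finset.single_le_sum_of_canonicallyOrdered
    (f := fun q => q i + tcomp (q i) (lowerSubst A Tf i)) hq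
  exact le_self_add.trans h

theorem tcomp_le_nonSelfBound {q : Fin n → MvPolynomial (Vn n) ℕ} (hq : q ∈ Tf) (i : Fin n) :
    tcomp (q i) (lowerSubst A Tf i) ≤ nonSelfBound A Tf i := by
  have h := Finset.single_le_sum_of_canonicallyOrdered
    (f := fun q => q i + tcomp (q i) (lowerSubst A Tf i)) hq
  exact le_add_self.trans h

theorem isDominated_of_mem {q : Fin n → MvPolynomial (Vn n) ℕ} (hq : q ∈ Tf)
    (hqT : IsTauClosedIterative A q) : IsDominated A Tf q := by
  refine fun i => ⟨fun hi => ?_, fun _ => le_nonSelfBound hq i⟩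
  obtain ⟨r, hqi, -⟩ := hqT.eq_X_add_X_mul i hi
  refine ⟨r, ?_, hqi⟩
  simpa only [hqi, primeOf_X_add_X_mul] using primeOf_le_primeBound (A := A) hq i

theorem isDominated_starComp {q p : Fin n → MvPolynomial (Vn n) ℕ} (hq : q ∈ Tf)
    (hqT : IsTauClosedIterative A q) (hp : IsDominated A Tf p) :
    IsDominated A Tf (starComp A q p) := by
  intro i
  constructor
  · intro hi
    obtain ⟨r, hqi, hr⟩ := hqT.eq_X_add_X_mul i hi
    obtain ⟨s, hs, hpi⟩ := (hp i).1 hi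
    have hr' : ∀ j : Fin n, (Sum.inl j : Vn n) ∈ (primeOf (q i) i).vars →
        j ∈ (A j).vars ∧ j < i := by
      rwa [hqi, primeOf_X_add_X_mul]
    refine ⟨_, pjoin_le ?_ ?_, if_pos hi⟩
    · rwa [hpi, primeOf_X_add_X_mul]
    · exact (hp.tcomp_le hr').trans (tcomp_primeOf_le_primeBound hq i)
  · intro hi
    have hlt : ∀ j : Fin n, (Sum.inl j : Vn n) ∈ (q i).vars → j ∈ (A j).vars ∧ j < i :=
      fun j hj => have ⟨hjA, hji⟩ := hqT.mem_vars i j hj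
        ⟨hjA, hji.lt_of_ne fun h => hi (h ▸ hjA)⟩
    rw [show starComp A q p i = tcomp (q i) p from if_neg hi]
    exact (hp.tcomp_le hlt).trans (tcomp_le_nonSelfBound hq i)

end StarClosure

open StarClosure in
theorem stmt14_general {n : ℕ} (A : Fin n → MvPolynomial (Fin n) ℕ)
    (T : Set (Fin n → MvPolynomial (Vn n) ℕ)) (hfin : T.Finite)
    (hiter : ∀ f ∈ T, ∀ i j : Fin n,
      (Sum.inl j : Vn n) ∈ (f i).vars → j ∈ (A j).vars ∧ j ≤ i)
    (hclosed : ∀ f ∈ T, ∀ i : Fin n, i ∈ (A i).vars →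
      ∃ r : MvPolynomial (Vn n) ℕ,
        f i = X (Sum.inl i) + X (Sum.inr ()) * r ∧
        ∀ j : Fin n, (Sum.inl j : Vn n) ∈ r.vars → j ∈ (A j).vars ∧ j < i) :
    (⋃ k, starPow A T k).Finite := by
  have hT : ∀ q ∈ T, q ∈ hfin.toFinset ∧ IsTauClosedIterative A q :=
    fun q hq => ⟨hfin.mem_toFinset.2 hq, hiter q hq, hclosed q hq⟩
  refine (finite_setOf_isDominated A hfin.toFinset).subset (Set.iUnion_subset fun k => ?_)
  induction k with
  | zero => exact fun q hq => isDominated_of_mem (hT q hq).1 (hT q hq).2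
  | succ k ih =>
    rintro _ (hp | ⟨q, hq, p, hp, rfl⟩)
    · exact ih hp
    · exact isDominated_starComp (hT q hq).1 (hT q hq).2 (ih hp)

/-- Finite Closure Lemma: for a finite set `T` of τ-closed, similar iterative
τ-multi-polynomials, the closure `T^★ = ⋃ₖ T^{⋆(k)}` under τ-absorbing
composition is finite. -/
theorem stmt14 {n : ℕ} (A : Fin n → MvPolynomial (Fin n) ℕ)
    (T : Set (Fin n → MvPolynomial (Vn n) ℕ)) (hfin : T.Finite)
    (hsim : ∀ f ∈ T, ∀ i, flat (f i) = A i)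
    (hiter : ∀ f ∈ T, ∀ i j : Fin n,
      (Sum.inl j : Vn n) ∈ (f i).vars → j ∈ (A j).vars ∧ j ≤ i)
    (hclosed : ∀ f ∈ T, ∀ i : Fin n, i ∈ (A i).vars →
      ∃ r : MvPolynomial (Vn n) ℕ,
        f i = X (Sum.inl i) + X (Sum.inr ()) * r ∧
        ∀ j : Fin n, (Sum.inl j : Vn n) ∈ r.vars → j ∈ (A j).vars ∧ j < i) :
    (⋃ k, starPow A T k).Finite :=
  stmt14_general A T hfin hiter hclosed
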